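/- Let n ≥ 2, α < 0, and m ≥ 1. Define the operator L on n-tuples u = (u_1,…,u_n) of polynomials in z_1,…,z_n by (Lu)_k = (n − α − 1) u_k + Σ_{j=1}^n ((n − α − 2) ∂u_k/∂z_j + ∂u_j/∂z_k) z_j. If u ≠ 0 has each component u_k a homogeneous polynomial of degree m, and L u = λ u for some λ ∈ ℂ, then Re λ ≥ 2(n − α − 2). (L is the complex Laplacian ∂∂* + ∂*∂ on (1,0)-forms Σ u_k dz_k of the weighted ∂-complex on the unit ball with the half hyperbolic metric and weight ψ = α log(1 − |z|²), restricted to the invariant subspace of forms with homogeneous polynomial coefficients of degree m.) -/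

import Mathlib

/-!
Everything reduces to polynomial algebra. For a tuple `P` of homogeneous polynomials of degree
`m`, Euler's identity turns the eigenvalue equation into `∑ⱼ Xⱼ ∂ₖPⱼ = (λ - a - m b) Pₖ`, where
`a = n - α - 1` and `b = n - α - 2`. Since `∂ₖ(∑ⱼ Xⱼ Pⱼ) = Pₖ + ∑ⱼ Xⱼ ∂ₖPⱼ`, Euler's identity for
the degree `m + 1` polynomial `S = ∑ⱼ Xⱼ Pⱼ` forces `λ - a - m b = m` if `S ≠ 0` and
`λ - a - m b = -1` if `S = 0`. So `λ` is `(m + 1)(n - α - 1)` or `(m + 1)(n - α - 2)`.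
-/

open Complex MeasureTheory Finset

noncomputable section

/-- The Wirtinger derivative `∂f/∂zₖ` of a (real-differentiable) function
`f : ℂⁿ → ℂ`, namely `½(∂f/∂xₖ − i ∂f/∂yₖ)`. -/
def wirtZ {n : ℕ} (f : (Fin n → ℂ) → ℂ) (k : Fin n) (z : Fin n → ℂ) : ℂ :=
  (1 / 2 : ℂ) *
    (fderiv ℝ f z (Pi.single k 1) - Complex.I * fderiv ℝ f z (Pi.single k Complex.I))

namespace MvPolynomial

section Derivative

variable {𝕜 σ : Type*} [NontriviallyNormedField 𝕜] [Fintype σ]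

theorem hasFDerivAt_eval (p : MvPolynomial σ 𝕜) (x : σ → 𝕜) :
    HasFDerivAt (fun y => eval y p)
      (∑ i, eval x (pderiv i p) • (ContinuousLinearMap.proj i : (σ → 𝕜) →L[𝕜] 𝕜)) x := by
  induction p using MvPolynomial.induction_on with
  | C a =>
    simp only [eval_C]
    refine (hasFDerivAt_const (𝕜 := 𝕜) a x).congr_fderiv ?_
    ext v
    simp
  | add p q hp hq =>
    simp only [map_add]
    refine (hp.add hq).congr_fderiv ?_
    ext v
    simp [add_mul, Finset.sum_add_distrib]
  | mul_X p i hp =>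
    classical
    simp only [eval_mul, eval_X]
    refine (hp.mul' (ContinuousLinearMap.proj i : (σ → 𝕜) →L[𝕜] 𝕜).hasFDerivAt).congr_fderiv ?_
    ext v
    simp [Pi.single_apply, apply_ite (eval x), mul_add, Finset.sum_add_distrib, Finset.mul_sum,
      mul_comm, mul_left_comm]

end Derivative

theorem pderiv_sum_X_mul {R σ : Type*} [CommSemiring R] [Fintype σ] (P : σ → MvPolynomial σ R)
    (k : σ) :
    pderiv k (∑ j, X j * P j) = P k + ∑ j, X j * pderiv k (P j) := by
  classical
  simp [pderiv_X, Pi.single_apply, Finset.sum_add_distrib, add_comm]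

section Eigenvalue

variable {R σ : Type*} [CommRing R] [Fintype σ]

def laplacian (a b : R) (P : σ → MvPolynomial σ R) (k : σ) : MvPolynomial σ R :=
  C a * P k + ∑ j, (C b * pderiv j (P k) + pderiv k (P j)) * X j

theorem laplacian_eq_of_isHomogeneous {m : ℕ} {P : σ → MvPolynomial σ R}
    (hhom : ∀ k, (P k).IsHomogeneous m) (a b : R) (k : σ) :
    laplacian a b P k = C (a + m * b) * P k + ∑ j, X j * pderiv k (P j) := by
  have split : ∑ j, (C b * pderiv j (P k) + pderiv k (P j)) * X j
      = C b * ∑ j, X j * pderiv j (P k) + ∑ j, X j * pderiv k (P j) := by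
    rw [Finset.mul_sum, ← Finset.sum_add_distrib]
    exact Finset.sum_congr rfl fun j _ => by ring
  rw [laplacian, split, (hhom k).sum_X_mul_pderiv, nsmul_eq_mul, map_add, map_mul, map_natCast]
  ring

theorem eq_or_eq_neg_one_of_sum_X_mul_pderiv [IsDomain R] {m : ℕ} {P : σ → MvPolynomial σ R}
    (hhom : ∀ k, (P k).IsHomogeneous m) (hne : ∃ k, P k ≠ 0) {μ : R}
    (h : ∀ k, ∑ j, X j * pderiv k (P j) = C μ * P k) : μ = m ∨ μ = -1 := by
  set S := ∑ j, X j * P j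
  have hS : ∀ k, pderiv k S = C (μ + 1) * P k := fun k => by
    rw [pderiv_sum_X_mul, h, map_add, map_one]; ring
  have hShom : S.IsHomogeneous (m + 1) :=
    IsHomogeneous.sum _ _ _ fun j _ => by
      simpa [add_comm] using (isHomogeneous_X R j).mul (hhom j)
  have euler : C ((m : R) + 1) * S = C (μ + 1) * S := calc
    _ = (m + 1) • S := by rw [nsmul_eq_mul]; simp
    _ = ∑ j, X j * pderiv j S := hShom.sum_X_mul_pderiv.symm
    _ = C (μ + 1) * S := by
      simp only [hS, S, Finset.mul_sum]
      exact Finset.sum_congr rfl fun j _ => by ring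
  by_cases hS0 : S = 0
  · right
    obtain ⟨k, hk⟩ := hne
    have := hS k
    rw [hS0, map_zero, zero_eq_mul, C_eq_zero] at this
    exact eq_neg_of_add_eq_zero_left (this.resolve_right hk)
  · left
    simpa using (C_injective σ R (mul_right_cancel₀ hS0 euler)).symm

theorem eigenvalue_laplacian_of_isHomogeneous [IsDomain R] {m : ℕ} {P : σ → MvPolynomial σ R}
    (hhom : ∀ k, (P k).IsHomogeneous m) (hne : ∃ k, P k ≠ 0) {a b lam : R}
    (heig : ∀ k, laplacian a b P k = C lam * P k) :
    lam = a + m * b + m ∨ lam = a + m * b - 1 := by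
  have reduced : ∀ k, ∑ j, X j * pderiv k (P j) = C (lam - a - m * b) * P k := fun k => by
    have := heig k
    rw [laplacian_eq_of_isHomogeneous hhom, map_add, map_mul, map_natCast] at this
    rw [map_sub, map_sub, map_mul, map_natCast]
    linear_combination this
  rcases eq_or_eq_neg_one_of_sum_X_mul_pderiv hhom hne reduced with h | h
  · left; linear_combination h
  · right; linear_combination h

end Eigenvalue

end MvPolynomial

open MvPolynomial

theorem wirtZ_eq_of_hasFDerivAt {n : ℕ} {f : (Fin n → ℂ) → ℂ} {f' : (Fin n → ℂ) →L[ℂ] ℂ}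
    {z : Fin n → ℂ} (hf : HasFDerivAt f f' z) (k : Fin n) :
    wirtZ f k z = f' (Pi.single k 1) := by
  have hI : f' (Pi.single k I) = I * f' (Pi.single k 1) := by
    rw [← smul_eq_mul, ← map_smul, ← Pi.single_smul, smul_eq_mul, mul_one]
  rw [wirtZ, (hf.restrictScalars ℝ).fderiv]
  simp only [ContinuousLinearMap.coe_restrictScalars']
  rw [hI, ← mul_assoc, I_mul_I]
  ring

theorem wirtZ_eval {n : ℕ} (P : MvPolynomial (Fin n) ℂ) (k : Fin n) (z : Fin n → ℂ) :
    wirtZ (fun w => eval w P) k z = eval z (pderiv k P) := by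
  classical
  simp [wirtZ_eq_of_hasFDerivAt (hasFDerivAt_eval P z), Pi.single_apply]

/-- any eigenvalue `λ` of the complex Laplacian
`(Lu)ₖ = (n − α − 1) uₖ + Σⱼ ((n − α − 2) ∂uₖ/∂zⱼ + ∂uⱼ/∂zₖ) zⱼ` on nonzero
`n`-tuples of homogeneous polynomials of degree `m ≥ 1` satisfies
`Re λ ≥ 2(n − α − 2)`. -/
theorem stmt17 (n : ℕ) (hn : 2 ≤ n) (α : ℝ) (hα : α < 0) (m : ℕ) (hm : 1 ≤ m)
    (P : Fin n → MvPolynomial (Fin n) ℂ)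
    (hhom : ∀ k, (P k).IsHomogeneous m)
    (hne : ∃ k, P k ≠ 0)
    (u : Fin n → (Fin n → ℂ) → ℂ)
    (hu : ∀ k z, u k z = MvPolynomial.eval z (P k))
    (lam : ℂ)
    (heig : ∀ k : Fin n, ∀ z : Fin n → ℂ,
      ((n : ℂ) - (α : ℂ) - 1) * u k z +
          ∑ j, (((n : ℂ) - (α : ℂ) - 2) * wirtZ (u k) j z + wirtZ (u j) k z) * z j =
        lam * u k z) :
    2 * ((n : ℝ) - α - 2) ≤ lam.re := by
  obtain rfl : u = fun k w => eval w (P k) := funext fun k => funext (hu k)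
  have hpoly : ∀ k, laplacian ((n : ℂ) - α - 1) ((n : ℂ) - α - 2) P k = C lam * P k :=
    fun k => MvPolynomial.funext fun z => by simpa [laplacian, wirtZ_eval] using heig k z
  have hb : 0 ≤ (n : ℝ) - α - 2 := by
    have : (2 : ℝ) ≤ n := by exact_mod_cast hn
    linarith
  have hm' : (1 : ℝ) ≤ m := by exact_mod_cast hm
  rcases eigenvalue_laplacian_of_isHomogeneous hhom hne hpoly with rfl | rfl <;>
  · simp only [add_re, sub_re, mul_re, natCast_re, natCast_im, ofReal_re, ofReal_im, one_re,
      re_ofNat, im_ofNat, sub_im, sub_self, mul_zero, sub_zero]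
    nlinarith
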